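/- For m = 2 bosonic-anyon modes: (i) the beam-splitter Hamiltonian H = β₁†β₂ + β₂†β₁ maps the two-particle subspace W = span{e₍₂,₀₎, e₍₁,₁₎, e₍₀,₂₎} of the Fock space into itself, and its matrix in the ordered basis (e₍₂,₀₎, e₍₁,₁₎, e₍₀,₂₎) is M = √2·[[0, e^{iφ}, 0], [e^{−iφ}, 0, 1], [0, 1, 0]]; and (ii) the balanced beam splitter acting on the two-particle input produces the anyonic Hong–Ou–Mandel output: exp(i(π/4)·M) applied to the vector (0, 1, 0)ᵀ equals ( i·e^{iφ}/√2, 0, i/√2 )ᵀ. In particular the coincidence outcome |1,1⟩ is completely suppressed for every value of φ. -/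

import Mathlib

open scoped BigOperators

/-- The bosonic-anyon Fock space on `2` modes. -/
abbrev BosonicFock2 := (Fin 2 → ℕ) →₀ ℂ

/-- Bosonic-anyon creation operator `βᵢ†` on two modes. -/
noncomputable def bCreate (φ : ℝ) (i : Fin 2) : BosonicFock2 →ₗ[ℂ] BosonicFock2 :=
  Finsupp.lift _ ℂ _ fun n =>
    (Complex.exp (-(Complex.I * φ) * (∑ k ∈ Finset.univ.filter (fun k => k < i), (n k : ℂ)))
        * (Real.sqrt (n i + 1) : ℝ)) •
      Finsupp.single (Function.update n i (n i + 1)) 1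

/-- Bosonic-anyon annihilation operator `βᵢ` on two modes. -/
noncomputable def bAnnih (φ : ℝ) (i : Fin 2) : BosonicFock2 →ₗ[ℂ] BosonicFock2 :=
  Finsupp.lift _ ℂ _ fun n =>
    (Complex.exp ((Complex.I * φ) * (∑ k ∈ Finset.univ.filter (fun k => k < i), (n k : ℂ)))
        * (Real.sqrt (n i) : ℝ)) •
      Finsupp.single (Function.update n i (n i - 1)) 1

/-- The beam-splitter Hamiltonian `H = β₁†β₂ + β₂†β₁` on two bosonic-anyon modes. -/
noncomputable def bsHamiltonian (φ : ℝ) : BosonicFock2 →ₗ[ℂ] BosonicFock2 :=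
  bCreate φ 0 ∘ₗ bAnnih φ 1 + bCreate φ 1 ∘ₗ bAnnih φ 0

/-- Fock basis vector `e_n` for an occupation pair `n`. -/
noncomputable def fock (n : Fin 2 → ℕ) : BosonicFock2 := Finsupp.single n 1

/-- The matrix of `H` in the ordered basis `(e₍₂,₀₎, e₍₁,₁₎, e₍₀,₂₎)`:
`M = √2·[[0, e^{iφ}, 0], [e^{−iφ}, 0, 1], [0, 1, 0]]`. -/
noncomputable def bsMatrix (φ : ℝ) : Matrix (Fin 3) (Fin 3) ℂ :=
  ((Real.sqrt 2 : ℝ) : ℂ) •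
    !![0, Complex.exp (Complex.I * φ), 0;
       Complex.exp (-(Complex.I * φ)), 0, 1;
       0, 1, 0]

/-!
On the Fock vectors `e₍ₐ,b₎` the Hamiltonian only moves one particle between the modes, which
gives part (i). For part (ii), `M` has the eigenvectors `u± = (e^{iφ}, ±√2, 1)` with eigenvalues
`±2`, and `e₍₁,₁₎ = (u₊ - u₋)/(2√2)`. The balanced beam splitter multiplies `u±` by
`e^{±iπ/2} = ±i`, so the output is `i(u₊ + u₋)/(2√2)`, in which the middle entries cancel.
-/

open Matrix NormedSpace

open scoped Norms.Operator in
theorem Matrix.exp_mulVec_of_mulVec_eq_smul {𝕂 n : Type*} [RCLike 𝕂] [Fintype n] [DecidableEq n]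
    {A : Matrix n n 𝕂} {v : n → 𝕂} {μ : 𝕂} (h : A *ᵥ v = μ • v) :
    exp A *ᵥ v = exp μ • v := by
  have hpow (k : ℕ) : A ^ k *ᵥ v = μ ^ k • v := by
    induction k with
    | zero => simp
    | succ k ih => rw [pow_succ', ← mulVec_mulVec, ih, mulVec_smul, h, smul_smul, pow_succ]
  have hA : HasSum (fun k => ((k.factorial : 𝕂)⁻¹ • A ^ k) *ᵥ v) (exp A *ᵥ v) := by
    rw [congrFun (exp_eq_tsum 𝕂) A]
    exact (expSeries_summable' (𝕂 := 𝕂) A).hasSum.map (mulVec.addMonoidHomLeft v)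
      (continuous_id.matrix_mulVec continuous_const)
  have hμ : HasSum (fun k => ((k.factorial : 𝕂)⁻¹ • μ ^ k) • v) (exp μ • v) := by
    rw [congrFun (exp_eq_tsum 𝕂) μ]
    exact (expSeries_summable' (𝕂 := 𝕂) μ).hasSum.smul_const v
  refine hA.unique ?_
  simpa only [smul_mulVec, hpow, smul_smul, smul_eq_mul] using hμ

lemma bCreate_fock (φ : ℝ) (i : Fin 2) (n : Fin 2 → ℕ) :
    bCreate φ i (fock n) =
      (Complex.exp (-(Complex.I * φ) * ∑ k ∈ Finset.univ.filter (· < i), (n k : ℂ))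
        * (Real.sqrt (n i + 1) : ℝ)) • fock (Function.update n i (n i + 1)) := by
  simp [bCreate, fock]

lemma bAnnih_fock (φ : ℝ) (i : Fin 2) (n : Fin 2 → ℕ) :
    bAnnih φ i (fock n) =
      (Complex.exp ((Complex.I * φ) * ∑ k ∈ Finset.univ.filter (· < i), (n k : ℂ))
        * (Real.sqrt (n i) : ℝ)) • fock (Function.update n i (n i - 1)) := by
  simp [bAnnih, fock]

-- At `a = 0` or `b = 0` the truncated subtraction is harmless: the coefficient vanishes.
lemma bsHamiltonian_fock (φ : ℝ) (a b : ℕ) :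
    bsHamiltonian φ (fock ![a, b]) =
      (Complex.exp (Complex.I * φ * a) * (Real.sqrt b * Real.sqrt (a + 1) : ℝ)) •
          fock ![a + 1, b - 1]
        + (Complex.exp (-(Complex.I * φ * (a - 1 : ℕ))) * (Real.sqrt a * Real.sqrt (b + 1) : ℝ)) •
          fock ![a - 1, b + 1] := by
  have update_zero (c d e : ℕ) : Function.update ![c, d] 0 e = ![e, d] := by
    ext k; fin_cases k <;> rfl
  have update_one (c d e : ℕ) : Function.update ![c, d] 1 e = ![c, e] := by
    ext k; fin_cases k <;> rfl
  simp only [bsHamiltonian, LinearMap.add_apply, LinearMap.comp_apply]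
  simp [bAnnih_fock, bCreate_fock, Finset.filter_eq', update_zero, update_one]
  simp only [← Complex.coe_smul, smul_smul]
  module

lemma bsHamiltonian_fock_two_zero (φ : ℝ) :
    bsHamiltonian φ (fock ![2, 0])
      = (((Real.sqrt 2 : ℝ) : ℂ) * Complex.exp (-(Complex.I * φ))) • fock ![1, 1] := by
  norm_num [bsHamiltonian_fock, mul_comm]

lemma bsHamiltonian_fock_one_one (φ : ℝ) :
    bsHamiltonian φ (fock ![1, 1])
      = (((Real.sqrt 2 : ℝ) : ℂ) * Complex.exp (Complex.I * φ)) • fock ![2, 0]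
        + ((Real.sqrt 2 : ℝ) : ℂ) • fock ![0, 2] := by
  norm_num [bsHamiltonian_fock, mul_comm]

lemma bsHamiltonian_fock_zero_two (φ : ℝ) :
    bsHamiltonian φ (fock ![0, 2]) = ((Real.sqrt 2 : ℝ) : ℂ) • fock ![1, 1] := by
  simp [bsHamiltonian_fock]

noncomputable def bsEigenvector (φ : ℝ) (s : ℂ) : Fin 3 → ℂ :=
  ![Complex.exp (Complex.I * φ), s * (Real.sqrt 2 : ℂ), 1]

lemma bsMatrix_mulVec_bsEigenvector (φ : ℝ) {s : ℂ} (hs : s ^ 2 = 1) :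
    bsMatrix φ *ᵥ bsEigenvector φ s = (2 * s) • bsEigenvector φ s := by
  have hsqrt : ((Real.sqrt 2 : ℝ) : ℂ) ^ 2 = 2 := by norm_cast; simp
  have hphase : Complex.exp (-(Complex.I * φ)) * Complex.exp (Complex.I * φ) = 1 := by
    rw [← Complex.exp_add]; simp
  ext k
  fin_cases k <;> simp [bsMatrix, bsEigenvector, mulVec, dotProduct, Fin.sum_univ_three]
  · linear_combination s * Complex.exp (Complex.I * φ) * hsqrt
  · linear_combination (Real.sqrt 2 : ℂ) * hphase - 2 * (Real.sqrt 2 : ℂ) * hs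
  · linear_combination s * hsqrt

lemma exp_smul_bsMatrix_mulVec_bsEigenvector (φ : ℝ) (t : ℂ) {s : ℂ} (hs : s ^ 2 = 1) :
    exp (t • bsMatrix φ) *ᵥ bsEigenvector φ s = Complex.exp (2 * s * t) • bsEigenvector φ s := by
  rw [Complex.exp_eq_exp_ℂ]
  refine exp_mulVec_of_mulVec_eq_smul ?_
  rw [smul_mulVec, bsMatrix_mulVec_bsEigenvector φ hs, smul_smul, mul_comm]

lemma exp_bsMatrix_mulVec_fock_one_one (φ : ℝ) :
    exp ((Complex.I * (Real.pi / 4)) • bsMatrix φ) *ᵥ ![0, 1, 0]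
      = ![Complex.I * Complex.exp (Complex.I * φ) / (Real.sqrt 2 : ℂ), 0,
          Complex.I / (Real.sqrt 2 : ℂ)] := by
  have hsqrt : ((Real.sqrt 2 : ℝ) : ℂ) ≠ 0 := by norm_num
  have hsplit : ![0, 1, 0] =
      (2 * (Real.sqrt 2 : ℂ))⁻¹ • (bsEigenvector φ 1 - bsEigenvector φ (-1)) := by
    ext k; fin_cases k <;> simp [bsEigenvector]
    field_simp; ring
  have hplus : Complex.exp (2 * 1 * (Complex.I * (Real.pi / 4))) = Complex.I := by
    rw [show 2 * 1 * (Complex.I * (Real.pi / 4)) = Real.pi / 2 * Complex.I by ring,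
      Complex.exp_pi_div_two_mul_I]
  have hminus : Complex.exp (2 * -1 * (Complex.I * (Real.pi / 4))) = -Complex.I := by
    rw [show 2 * -1 * (Complex.I * (Real.pi / 4)) = -Real.pi / 2 * Complex.I by ring,
      Complex.exp_neg_pi_div_two_mul_I]
  rw [hsplit, mulVec_smul, mulVec_sub, exp_smul_bsMatrix_mulVec_bsEigenvector φ _ (one_pow 2),
    exp_smul_bsMatrix_mulVec_bsEigenvector φ _ neg_one_sq, hplus, hminus]
  ext k; fin_cases k <;> simp [bsEigenvector] <;> field_simp <;> ring

/-- **Anyonic Hong–Ou–Mandel effect for two bosonic-anyon modes.**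
(i) The beam-splitter Hamiltonian `H = β₁†β₂ + β₂†β₁` maps the two-particle subspace
`W = span{e₍₂,₀₎, e₍₁,₁₎, e₍₀,₂₎}` into itself, and its matrix in this ordered basis is
`M = √2·[[0, e^{iφ}, 0], [e^{−iφ}, 0, 1], [0, 1, 0]]`;
(ii) the balanced beam splitter produces the anyonic Hong–Ou–Mandel output:
`exp(i(π/4)·M)·(0,1,0)ᵀ = (i·e^{iφ}/√2, 0, i/√2)ᵀ`, so the coincidence outcome `|1,1⟩`
is completely suppressed for every `φ`. -/
theorem bosonic_anyon_hong_ou_mandel (φ : ℝ) :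
    (∀ v ∈ Submodule.span ℂ {fock ![2, 0], fock ![1, 1], fock ![0, 2]},
        bsHamiltonian φ v ∈
          Submodule.span ℂ {fock ![2, 0], fock ![1, 1], fock ![0, 2]}) ∧
    bsHamiltonian φ (fock ![2, 0])
      = (((Real.sqrt 2 : ℝ) : ℂ) * Complex.exp (-(Complex.I * φ))) • fock ![1, 1] ∧
    bsHamiltonian φ (fock ![1, 1])
      = (((Real.sqrt 2 : ℝ) : ℂ) * Complex.exp (Complex.I * φ)) • fock ![2, 0]
        + ((Real.sqrt 2 : ℝ) : ℂ) • fock ![0, 2] ∧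
    bsHamiltonian φ (fock ![0, 2]) = ((Real.sqrt 2 : ℝ) : ℂ) • fock ![1, 1] ∧
    (NormedSpace.exp ((Complex.I * (Real.pi / 4)) • bsMatrix φ)).mulVec ![0, 1, 0]
      = ![Complex.I * Complex.exp (Complex.I * φ) / (Real.sqrt 2 : ℂ), 0,
          Complex.I / (Real.sqrt 2 : ℂ)] := by
  set W := Submodule.span ℂ {fock ![2, 0], fock ![1, 1], fock ![0, 2]}
  have h20 : fock ![2, 0] ∈ W := Submodule.subset_span (by simp)
  have h11 : fock ![1, 1] ∈ W := Submodule.subset_span (by simp)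
  have h02 : fock ![0, 2] ∈ W := Submodule.subset_span (by simp)
  have hbasis : ∀ w ∈ ({fock ![2, 0], fock ![1, 1], fock ![0, 2]} : Set BosonicFock2),
      bsHamiltonian φ w ∈ W := by
    rintro _ (rfl | rfl | rfl)
    · rw [bsHamiltonian_fock_two_zero]; exact W.smul_mem _ h11
    · rw [bsHamiltonian_fock_one_one]; exact W.add_mem (W.smul_mem _ h20) (W.smul_mem _ h02)
    · rw [bsHamiltonian_fock_zero_two]; exact W.smul_mem _ h11
  exact ⟨fun v hv => (Submodule.map_span_le _ _ _).2 hbasis (Submodule.mem_map_of_mem hv),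
    bsHamiltonian_fock_two_zero φ, bsHamiltonian_fock_one_one φ, bsHamiltonian_fock_zero_two φ,
    exp_bsMatrix_mulVec_fock_one_one φ⟩
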